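/- Let q be a prime power, n ≥ 1, and f : F_q^n → F_q^n an arbitrary function. For k ∈ F_q^n define g_k(x) := f(x) + (k_1 x_1, ..., k_n x_n). If A is uniform on F_q^n, then the average over k of the Shannon entropy H(g_k(A)) is at least log_2(q^n) - n·log_2(2 - 1/q). -/

import Mathlib

open Finset

/-- Probability mass of value `y` under the pushforward of the uniform
distribution on `α` along `g`. -/
noncomputable def mass {α β : Type*} [Fintype α] [DecidableEq β]
    (g : α → β) (y : β) : ℝ :=
  (Finset.univ.filter (fun x => g x = y)).card / (Fintype.card α : ℝ)

/-- Collision probability of `g(A)` for `A` uniform on `α`. -/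
noncomputable def collProb {α β : Type*} [Fintype α] [Fintype β] [DecidableEq β]
    (g : α → β) : ℝ :=
  ∑ y, (mass g y) ^ 2

/-- Shannon entropy (base 2) of `g(A)` for `A` uniform on `α`.
(Terms with zero mass contribute `0` since `Real.logb 2 0 = 0`.) -/
noncomputable def shannon {α β : Type*} [Fintype α] [Fintype β] [DecidableEq β]
    (g : α → β) : ℝ :=
  -∑ y, mass g y * Real.logb 2 (mass g y)

/-- Rényi entropy (base 2) of `g(A)` for `A` uniform on `α`. -/
noncomputable def renyi2 {α β : Type*} [Fintype α] [Fintype β] [DecidableEq β]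
    (g : α → β) : ℝ :=
  -Real.logb 2 (collProb g)

/-!
Shannon entropy dominates collision entropy, and by concavity of `log` the mean of
`-log (collision probability)` over the keys `k` is at least `-log` of the mean collision
probability. That mean is a double count: two inputs `x, y` collide under `g_k` exactly when
`k_i (x_i - y_i) = f(y)_i - f(x)_i` for all `i`, which fixes `k_i` wherever `x_i ≠ y_i`. So at most
`∏ i, (if x_i = y_i then q else 1)` keys make them collide, and summing over `y` gives `(2q - 1)^n`;
the mean collision probability is therefore at most `((2q - 1) / q²)^n = (2 - 1/q)^n / q^n`.
-/
open Real

-- Weighted AM-GM after taking logarithms; `hwz` keeps the junk value `log 0 = 0` out.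
theorem Real.sum_mul_log_le_log_sum_mul {ι : Type*} (s : Finset ι) (w z : ι → ℝ)
    (hw : ∀ i ∈ s, 0 ≤ w i) (hw' : ∑ i ∈ s, w i = 1) (hz : ∀ i ∈ s, 0 ≤ z i)
    (hwz : ∀ i ∈ s, z i = 0 → w i = 0) :
    ∑ i ∈ s, w i * log (z i) ≤ log (∑ i ∈ s, w i * z i) := by
  have hpow : ∀ i ∈ s, 0 < z i ^ w i ∧ log (z i ^ w i) = w i * log (z i) := by
    intro i hi
    rcases (hz i hi).eq_or_lt with h | h
    · simp [← h, hwz i hi h.symm]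
    · exact ⟨rpow_pos_of_pos h _, log_rpow h _⟩
  calc ∑ i ∈ s, w i * log (z i) = log (∏ i ∈ s, z i ^ w i) := by
        rw [log_prod fun i hi => (hpow i hi).1.ne']
        exact sum_congr rfl fun i hi => (hpow i hi).2.symm
    _ ≤ log (∑ i ∈ s, w i * z i) :=
        log_le_log (prod_pos fun i hi => (hpow i hi).1)
          (geom_mean_le_arith_mean_weighted s w z hw hw' hz)

section Entropy

variable {α β : Type*} [Fintype α] [DecidableEq β]

lemma mass_nonneg (g : α → β) (y : β) : 0 ≤ mass g y := by
  unfold mass; positivity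

lemma sum_mass [Nonempty α] [Fintype β] (g : α → β) : ∑ y, mass g y = 1 := by
  simp only [mass, ← sum_div, ← Nat.cast_sum,
    ← card_eq_sum_card_fiberwise fun x _ => mem_univ (g x), card_univ]
  exact div_self (Nat.cast_ne_zero.mpr Fintype.card_ne_zero)

lemma collProb_eq_card [Fintype β] (g : α → β) :
    collProb g = #{p : α × α | g p.1 = g p.2} / (Fintype.card α : ℝ) ^ 2 := by
  have hfiber : ∀ y, (univ.filter fun p : α × α => g p.1 = g p.2).filter (fun p => g p.1 = y) =
      (univ.filter (g · = y)) ×ˢ (univ.filter (g · = y)) := by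
    intro y; ext ⟨a, b⟩; simp only [mem_filter, mem_univ, true_and, mem_product]
    constructor
    · rintro ⟨hab, rfl⟩; exact ⟨rfl, hab.symm⟩
    · rintro ⟨rfl, hb⟩; exact ⟨hb.symm, rfl⟩
  rw [card_eq_sum_card_fiberwise fun p _ => mem_univ (g p.1)]
  simp only [collProb, mass, hfiber, card_product, div_pow, ← sum_div]
  push_cast
  simp only [sq]

lemma collProb_pos [Nonempty α] [Fintype β] (g : α → β) : 0 < collProb g := by
  obtain ⟨y, hy⟩ : ∃ y, 0 < mass g y := by
    by_contra! h
    have := sum_mass g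
    rw [sum_eq_zero fun y _ => le_antisymm (h y) (mass_nonneg g y)] at this
    exact zero_ne_one this
  exact sum_pos' (fun y _ => sq_nonneg _) ⟨y, mem_univ y, pow_pos hy 2⟩

lemma renyi2_le_shannon [Nonempty α] [Fintype β] (g : α → β) : renyi2 g ≤ shannon g := by
  have h := sum_mul_log_le_log_sum_mul univ (mass g) (mass g) (fun y _ => mass_nonneg g y)
    (sum_mass g) (fun y _ => mass_nonneg g y) (fun y _ h => h)
  simp only [renyi2, shannon, collProb, logb, ← mul_div_assoc, ← sum_div, sq, neg_le_neg_iff]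
  exact div_le_div_of_nonneg_right h (log_pos one_lt_two).le

lemma neg_logb_mean_collProb_le_mean_renyi2 {κ : Type*} [Fintype κ] [Nonempty κ] [Nonempty α]
    [Fintype β] (g : κ → α → β) :
    -logb 2 ((Fintype.card κ : ℝ)⁻¹ * ∑ k, collProb (g k)) ≤
      (Fintype.card κ : ℝ)⁻¹ * ∑ k, renyi2 (g k) := by
  have hκ : (0 : ℝ) < Fintype.card κ := Nat.cast_pos.mpr Fintype.card_pos
  have h := sum_mul_log_le_log_sum_mul univ (fun _ => (Fintype.card κ : ℝ)⁻¹)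
    (fun k => collProb (g k)) (fun _ _ => by positivity) (by simp [hκ.ne'])
    (fun k _ => (collProb_pos (g k)).le) (fun k _ h => absurd h (collProb_pos (g k)).ne')
  rw [← mul_sum, ← mul_sum] at h
  simp only [renyi2, logb, ← sum_div, sum_neg_distrib, mul_neg, neg_le_neg_iff, ← mul_div_assoc]
  exact div_le_div_of_nonneg_right h (log_pos one_lt_two).le

end Entropy

section Collisions

variable {ι F : Type*} [Fintype ι] [DecidableEq ι] [Field F] [Fintype F] [DecidableEq F]

lemma card_filter_add_mul_eq_le (u v a b : F) :
    #{t : F | u + t * a = v + t * b} ≤ if a = b then Fintype.card F else 1 := by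
  split_ifs with hab
  · exact card_le_univ _
  · refine card_le_one.mpr fun t ht s hs => ?_
    simp only [mem_filter, mem_univ, true_and] at ht hs
    have : (t - s) * (a - b) = 0 := by linear_combination ht - hs
    exact sub_eq_zero.mp ((mul_eq_zero.mp this).resolve_right (sub_ne_zero.mpr hab))

lemma card_filter_add_mul_eq_le_prod (f : (ι → F) → ι → F) (x y : ι → F) :
    #{k : ι → F | f x + k * x = f y + k * y} ≤
      ∏ i, if x i = y i then Fintype.card F else 1 := by
  have : ({k : ι → F | f x + k * x = f y + k * y} : Finset _) =
      Fintype.piFinset fun i => {t | f x i + t * x i = f y i + t * y i} := by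
    ext k; simp [funext_iff]
  rw [this, Fintype.card_piFinset]
  exact prod_le_prod' fun i _ => card_filter_add_mul_eq_le _ _ _ _

lemma sum_prod_ite_eq (x : ι → F) (c : ℝ) :
    ∑ y : ι → F, ∏ i, (if x i = y i then c else 1) =
      (c + (Fintype.card F - 1)) ^ Fintype.card ι := by
  rw [← Fintype.prod_sum fun i b => if x i = b then c else 1]
  have : ∀ a : F, ∑ b, (if a = b then c else 1) = c + (Fintype.card F - 1) := by
    intro a
    rw [Fintype.sum_eq_add_sum_compl a, if_pos rfl,
      sum_congr rfl fun b hb => if_neg fun h => by simp [h] at hb]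
    simp [card_compl, Nat.cast_sub Fintype.card_pos]
  simp [this]

lemma sum_card_collisions_le (f : (ι → F) → ι → F) :
    ∑ k : ι → F, (#{p : (ι → F) × (ι → F) | f p.1 + k * p.1 = f p.2 + k * p.2} : ℝ) ≤
      (Fintype.card F : ℝ) ^ Fintype.card ι * (2 * Fintype.card F - 1) ^ Fintype.card ι := by
  calc ∑ k : ι → F, (#{p : (ι → F) × (ι → F) | f p.1 + k * p.1 = f p.2 + k * p.2} : ℝ)
      = ∑ p : (ι → F) × (ι → F), (#{k : ι → F | f p.1 + k * p.1 = f p.2 + k * p.2} : ℝ) := by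
        simp only [card_filter]
        push_cast
        exact sum_comm
    _ ≤ ∑ p : (ι → F) × (ι → F), ∏ i, if p.1 i = p.2 i then (Fintype.card F : ℝ) else 1 := by
        gcongr with p
        exact_mod_cast card_filter_add_mul_eq_le_prod f p.1 p.2
    _ = _ := by
        rw [Fintype.sum_prod_type]
        simp only [sum_prod_ite_eq, sum_const, card_univ, Fintype.card_fun, nsmul_eq_mul]
        push_cast
        ring

lemma mean_collProb_le (f : (ι → F) → ι → F) :
    (Fintype.card (ι → F) : ℝ)⁻¹ * ∑ k : ι → F, collProb (fun x => f x + k * x) ≤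
      (2 - 1 / Fintype.card F) ^ Fintype.card ι / Fintype.card F ^ Fintype.card ι := by
  simp only [collProb_eq_card, ← sum_div, Fintype.card_fun, Nat.cast_pow]
  calc _ ≤ ((Fintype.card F : ℝ) ^ Fintype.card ι)⁻¹ *
        ((Fintype.card F : ℝ) ^ Fintype.card ι * (2 * Fintype.card F - 1) ^ Fintype.card ι /
          ((Fintype.card F : ℝ) ^ Fintype.card ι) ^ 2) := by
        gcongr
        exact sum_card_collisions_le f
    _ = _ := by
        rw [show (2 : ℝ) - 1 / Fintype.card F = (2 * Fintype.card F - 1) / Fintype.card F by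
          field_simp, div_pow]
        field_simp

end Collisions

theorem stmt3_general (q n : ℕ) (F : Type*) [Field F] [Fintype F] [DecidableEq F]
    (hq : Fintype.card F = q) (f : (Fin n → F) → (Fin n → F)) :
    Real.logb 2 ((q : ℝ) ^ n) - n * Real.logb 2 (2 - 1 / (q : ℝ)) ≤
      (1 / (q : ℝ) ^ n) *
        ∑ k : Fin n → F, shannon (fun x i => f x i + k i * x i) := by
  subst hq
  have hF : (1 : ℝ) ≤ Fintype.card F := Nat.one_le_cast.mpr Fintype.card_pos
  have hmean := mean_collProb_le f
  simp only [Fintype.card_fun, Fintype.card_fin, Nat.cast_pow] at hmean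
  calc _ = -logb 2 ((2 - 1 / Fintype.card F) ^ n / (Fintype.card F : ℝ) ^ n) := by
        have : (0 : ℝ) < 2 - 1 / Fintype.card F := by
          have : 1 / (Fintype.card F : ℝ) ≤ 1 := div_le_one_of_le₀ hF (by positivity)
          linarith
        rw [logb_div (by positivity) (by positivity), logb_pow, logb_pow]
        ring
    _ ≤ -logb 2 (((Fintype.card F : ℝ) ^ n)⁻¹ *
          ∑ k : Fin n → F, collProb (fun x => f x + k * x)) := by
        have hpos : 0 < ((Fintype.card F : ℝ) ^ n)⁻¹ *
            ∑ k : Fin n → F, collProb (fun x => f x + k * x) :=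
          mul_pos (by positivity) (sum_pos (fun k _ => collProb_pos _) univ_nonempty)
        exact neg_le_neg (logb_le_logb_of_le one_lt_two hpos hmean)
    _ ≤ ((Fintype.card F : ℝ) ^ n)⁻¹ * ∑ k : Fin n → F, renyi2 (fun x => f x + k * x) := by
        simpa using neg_logb_mean_collProb_le_mean_renyi2 fun (k : Fin n → F) x => f x + k * x
    _ ≤ _ := by
        rw [one_div]
        gcongr with k
        exact renyi2_le_shannon _

theorem stmt3 (q n : ℕ) (hn : 1 ≤ n) (F : Type*) [Field F] [Fintype F] [DecidableEq F]
    (hq : Fintype.card F = q) (f : (Fin n → F) → (Fin n → F)) :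
    Real.logb 2 ((q : ℝ) ^ n) - n * Real.logb 2 (2 - 1 / (q : ℝ)) ≤
      (1 / (q : ℝ) ^ n) *
        ∑ k : Fin n → F, shannon (fun x i => f x i + k i * x i) :=
  stmt3_general q n F hq f
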